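/- Let k ≥ 1 and p ∈ (1, 2). For every z ∈ ℝ^k one has (1/√2) · min{|z|, |z|^{p/2}} ≤ |V_p(z)| ≤ min{|z|, |z|^{p/2}}. -/

import Mathlib

noncomputable def Vp (p : ℝ) {E : Type*} [NormedAddCommGroup E] [NormedSpace ℝ E] (z : E) : E :=
  ((1 + ‖z‖ ^ 2) ^ ((p - 2) / 4)) • z

/-!
Since `|V_p(z)| = (1 + t²)^e t` with `t = |z|` and `e = (p - 2)/4 ∈ [-1/2, 0]`, everything is a
one-variable inequality. The upper bound compares `1 + t²` with `1` and with `t²`; the lower bound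
compares it with `2` when `t ≤ 1` and with `2 t²` when `t ≥ 1`, losing the factor `2^e ≥ 1/√2`.
-/

theorem norm_Vp (p : ℝ) {E : Type*} [NormedAddCommGroup E] [NormedSpace ℝ E] (z : E) :
    ‖Vp p z‖ = (1 + ‖z‖ ^ 2) ^ ((p - 2) / 4) * ‖z‖ := by
  rw [Vp, norm_smul, Real.norm_of_nonneg (by positivity)]

namespace Real

theorem inv_sqrt_two_le_two_rpow {e : ℝ} (he : -(1 / 2) ≤ e) : 1 / √2 ≤ (2 : ℝ) ^ e := by
  calc 1 / √2 = (2 : ℝ) ^ (-(1 / 2) : ℝ) := by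
        rw [rpow_neg zero_le_two, ← sqrt_eq_rpow, one_div]
    _ ≤ (2 : ℝ) ^ e := rpow_le_rpow_of_exponent_le one_le_two he

theorem sq_rpow_mul_self (p : ℝ) {t : ℝ} (ht : 0 < t) :
    (t ^ 2) ^ ((p - 2) / 4) * t = t ^ (p / 2) := by
  rw [← rpow_natCast, ← rpow_mul ht.le, ← rpow_add_one ht.ne']
  ring_nf

variable {p t : ℝ}

theorem one_add_sq_rpow_mul_le_min (hp : p ≤ 2) (ht : 0 ≤ t) :
    (1 + t ^ 2) ^ ((p - 2) / 4) * t ≤ min t (t ^ (p / 2)) := by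
  have he : (p - 2) / 4 ≤ 0 := by linarith
  rcases ht.eq_or_lt with rfl | ht
  · simp [rpow_nonneg]
  refine le_min ?_ ?_
  · have h : (1 + t ^ 2) ^ ((p - 2) / 4) ≤ 1 := rpow_le_one_of_one_le_of_nonpos (by nlinarith) he
    nlinarith
  · calc (1 + t ^ 2) ^ ((p - 2) / 4) * t ≤ (t ^ 2) ^ ((p - 2) / 4) * t := by
          gcongr (?_ : ℝ) * t
          exact rpow_le_rpow_of_nonpos (by positivity) (by linarith) he
      _ = t ^ (p / 2) := sq_rpow_mul_self p ht

theorem inv_sqrt_two_mul_min_le_one_add_sq_rpow_mul (hp0 : 0 ≤ p) (hp : p ≤ 2) (ht : 0 ≤ t) :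
    1 / √2 * min t (t ^ (p / 2)) ≤ (1 + t ^ 2) ^ ((p - 2) / 4) * t := by
  have he : (p - 2) / 4 ≤ 0 := by linarith
  have h2 : 1 / √2 ≤ (2 : ℝ) ^ ((p - 2) / 4) := inv_sqrt_two_le_two_rpow (by linarith)
  rcases le_total t 1 with ht1 | ht1
  · calc 1 / √2 * min t (t ^ (p / 2)) ≤ 1 / √2 * t := by gcongr; exact min_le_left _ _
      _ ≤ (2 : ℝ) ^ ((p - 2) / 4) * t := by gcongr
      _ ≤ (1 + t ^ 2) ^ ((p - 2) / 4) * t := by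
          gcongr (?_ : ℝ) * t
          exact rpow_le_rpow_of_nonpos (by positivity) (by nlinarith) he
  · have ht0 : 0 < t := by linarith
    calc 1 / √2 * min t (t ^ (p / 2)) ≤ 1 / √2 * ((t ^ 2) ^ ((p - 2) / 4) * t) := by
          rw [sq_rpow_mul_self p ht0]; gcongr; exact min_le_right _ _
      _ ≤ (2 : ℝ) ^ ((p - 2) / 4) * ((t ^ 2) ^ ((p - 2) / 4) * t) := by gcongr
      _ = (2 * t ^ 2) ^ ((p - 2) / 4) * t := by
          rw [mul_rpow zero_le_two (by positivity)]; ring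
      _ ≤ (1 + t ^ 2) ^ ((p - 2) / 4) * t := by
          gcongr (?_ : ℝ) * t
          exact rpow_le_rpow_of_nonpos (by positivity) (by nlinarith) he

end Real

theorem stmt_3_general (k : ℕ) (p : ℝ) (hp1 : 1 < p) (hp2 : p < 2)
    (z : EuclideanSpace ℝ (Fin k)) :
    (1 / Real.sqrt 2) * min ‖z‖ (‖z‖ ^ (p / 2)) ≤ ‖Vp p z‖ ∧
      ‖Vp p z‖ ≤ min ‖z‖ (‖z‖ ^ (p / 2)) := by
  rw [norm_Vp]
  exact ⟨Real.inv_sqrt_two_mul_min_le_one_add_sq_rpow_mul (by linarith) hp2.le (norm_nonneg z),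
    Real.one_add_sq_rpow_mul_le_min hp2.le (norm_nonneg z)⟩

theorem stmt_3 (k : ℕ) (hk : 1 ≤ k) (p : ℝ) (hp1 : 1 < p) (hp2 : p < 2)
    (z : EuclideanSpace ℝ (Fin k)) :
    (1 / Real.sqrt 2) * min ‖z‖ (‖z‖ ^ (p / 2)) ≤ ‖Vp p z‖ ∧
      ‖Vp p z‖ ≤ min ‖z‖ (‖z‖ ^ (p / 2)) :=
  stmt_3_general k p hp1 hp2 z
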